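/- arXiv:2101.03242 — 2 statements merged into one kernel-verified Lean document; each statement's English description precedes it below -/
import Mathlib

section
/- Let C ∈ ℝ^{m×m}, let α ∈ ℝ^m be a row vector with α·𝟙 = 1, and suppose α e^{Cr} 𝟙 > 0 for all r in an interval [0, h). Then the curve A(r) := (α e^{Cr}) / (α e^{Cr} 𝟙), r ∈ [0, h), satisfies A(0) = α and the ordinary differential equation A'(r) = A(r) C − (A(r) C 𝟙) A(r). -/
/-! The row vector `f r = α e^{rC}` solves the linear equation `f' = f C`; the quotient rule
turns this into the Riccati equation for its normalisation `A = f / (f 𝟙)`. -/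

open NormedSpace Matrix Set Filter Topology

attribute [local instance] Matrix.normedAddCommGroup Matrix.normedSpace

section Calculus

variable {𝕜 : Type*} [NontriviallyNormedField 𝕜] {m n : Type*} [Fintype m] [Fintype n]
  {s : Set 𝕜} {r : 𝕜}

theorem HasDerivWithinAt.dotProduct_const {f : 𝕜 → n → 𝕜} {f' : n → 𝕜}
    (hf : HasDerivWithinAt f f' s r) (w : n → 𝕜) :
    HasDerivWithinAt (fun u => f u ⬝ᵥ w) (f' ⬝ᵥ w) s r :=
  HasDerivWithinAt.fun_sum fun i _ => (hasDerivWithinAt_pi.1 hf i).mul_const (w i)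

theorem HasDerivWithinAt.const_vecMul {M : 𝕜 → Matrix m n 𝕜} {M' : Matrix m n 𝕜}
    (hM : HasDerivWithinAt M M' s r) (α : m → 𝕜) :
    HasDerivWithinAt (fun u => α ᵥ* M u) (α ᵥ* M') s r :=
  hasDerivWithinAt_pi.2 fun j => HasDerivWithinAt.fun_sum fun i _ =>
    (hasDerivWithinAt_pi.1 (hasDerivWithinAt_pi.1 hM i) j).const_mul (α i)

theorem hasDerivWithinAt_riccati_of_normalized {f A : 𝕜 → n → 𝕜} {C : Matrix n n 𝕜}
    (hf : HasDerivWithinAt f (f r ᵥ* C) s r) (hfr : f r ⬝ᵥ 1 ≠ 0)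
    (hA : ∀ u ∈ s, A u = (f u ⬝ᵥ 1)⁻¹ • f u) (hr : r ∈ s) :
    HasDerivWithinAt A (A r ᵥ* C - (A r ᵥ* C ⬝ᵥ 1) • A r) s r := by
  have hquot := ((hf.dotProduct_const 1).inv hfr).smul hf
  have hderiv : A r ᵥ* C - (A r ᵥ* C ⬝ᵥ 1) • A r =
      (f r ⬝ᵥ 1)⁻¹ • f r ᵥ* C + (-(f r ᵥ* C ⬝ᵥ 1) / (f r ⬝ᵥ 1) ^ 2) • f r := by
    rw [hA r hr, smul_vecMul, smul_dotProduct, smul_eq_mul, smul_smul, sub_eq_add_neg,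
      ← neg_smul]
    congr 1
    field_simp
  rw [hderiv]
  exact hquot.congr hA (hA r hr)

end Calculus

theorem hasDerivAt_matrix_exp_smul {𝕂 m : Type*} [RCLike 𝕂] [Fintype m] [DecidableEq m]
    (C : Matrix m m 𝕂) (t : 𝕂) :
    HasDerivAt (fun u : 𝕂 => exp (u • C)) (exp (t • C) * C) t := by
  -- Differentiate for the operator norm, where the Banach-algebra lemma applies, and transport
  -- the slope limit, which only sees the topology shared by all norms on matrices.
  have hslope : Tendsto (slope (fun u : 𝕂 => exp (u • C)) t) (𝓝[≠] t)
      (𝓝 (exp (t • C) * C)) := by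
    let _ := Matrix.linftyOpNormedRing (n := m) (α := 𝕂)
    let _ := Matrix.linftyOpNormedAlgebra (n := m) (R := 𝕂) (α := 𝕂)
    have : @CompleteSpace (Matrix m m 𝕂) PseudoMetricSpace.toUniformSpace :=
      FiniteDimensional.complete 𝕂 _
    exact hasDerivAt_iff_tendsto_slope.mp (hasDerivAt_exp_smul_const C t)
  exact hasDerivAt_iff_tendsto_slope.mpr hslope

theorem stmt4 (m : ℕ) (C : Matrix (Fin m) (Fin m) ℝ) (α : Fin m → ℝ)
    (hα : α ⬝ᵥ 1 = 1) (h : ℝ) (hh : 0 < h)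
    (hpos : ∀ r ∈ Set.Ico (0:ℝ) h, 0 < vecMul α (exp (r • C)) ⬝ᵥ 1)
    (A : ℝ → (Fin m → ℝ))
    (hA : ∀ r ∈ Set.Ico (0:ℝ) h,
      A r = (vecMul α (exp (r • C)) ⬝ᵥ 1)⁻¹ • vecMul α (exp (r • C))) :
    A 0 = α ∧
    ∀ r ∈ Set.Ico (0:ℝ) h,
      HasDerivWithinAt A (vecMul (A r) C - (vecMul (A r) C ⬝ᵥ 1) • A r) (Set.Ico 0 h) r := by
  refine ⟨by simp [hA 0 ⟨le_rfl, hh⟩, hα], fun r hr => ?_⟩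
  have hf : HasDerivWithinAt (fun u => α ᵥ* exp (u • C)) (α ᵥ* exp (r • C) ᵥ* C) (Ico 0 h) r := by
    rw [vecMul_vecMul]
    exact (hasDerivAt_matrix_exp_smul C r).hasDerivWithinAt.const_vecMul α
  exact hasDerivWithinAt_riccati_of_normalized hf (hpos r hr).ne' hA hr
end

section
/- Let C⁺ have all eigenvalues with strictly negative real part, D^{−+} ∈ ℝ^{m⁻×m⁺}, Ψ ∈ ℝ^{m⁺×m⁻}, and define Υ₁(x) := e^{C⁺x} and Υ_{n+1}(x) := ∫₀^x e^{C⁺y} Ψ D^{−+} Υ_n(x−y) dy for n ≥ 1. Suppose the partial sums Σ_{n=1}^N Υ_n(x) are uniformly bounded on compact intervals and converge pointwise to Υ(x). Then Υ(x) = e^{(C⁺ + Ψ D^{−+})x} for all x ≥ 0. -/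
/-!
With `A = C⁺` and `B = Ψ D⁻⁺`, let `E x = exp (x • (A + B))` and let `S N` be the `N`-th partial
sum. Differentiating `y ↦ exp (y • A) * exp ((x - y) • (A + B))` gives Duhamel's formula, i.e. `E`
solves the Volterra equation `E x = exp (x • A) + ∫₀ˣ exp (y • A) * B * E (x - y) dy`, while the
recursion says `S (N + 1) x = exp (x • A) + ∫₀ˣ exp (y • A) * B * S N (x - y) dy`. The error
`E - S N` is therefore the `N`-th iterate of the Volterra operator applied to `E`; if `c` bounds
`‖exp (y • A) * B‖` and `M` bounds `‖E‖` on `[0, T]`, it is bounded there by `M (c x) ^ N / N!`.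
Hence `S N → E`, and the limit `Ulim` equals `E`.
-/

open NormedSpace Matrix MeasureTheory Set Filter

attribute [local instance] Matrix.normedAddCommGroup Matrix.normedSpace

open intervalIntegral

section BanachAlgebra

variable {𝔸 : Type*} [NormedRing 𝔸] [NormedAlgebra ℝ 𝔸]

noncomputable def expConv (A B : 𝔸) (W : ℝ → 𝔸) (x : ℝ) : 𝔸 :=
  ∫ y in (0 : ℝ)..x, exp (y • A) * B * W (x - y)

variable {A B : 𝔸} {T : ℝ}

lemma norm_expConv_le {W : ℝ → 𝔸} {c M x : ℝ} {N : ℕ} (hx : 0 ≤ x)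
    (hK : ∀ y ∈ Icc 0 x, ‖exp (y • A) * B‖ ≤ c)
    (hW : ∀ y ∈ Icc 0 x, ‖W y‖ ≤ M * ((c * y) ^ N / N.factorial)) :
    ‖expConv A B W x‖ ≤ M * ((c * x) ^ (N + 1) / (N + 1).factorial) := by
  have hc : 0 ≤ c := (norm_nonneg _).trans (hK 0 ⟨le_rfl, hx⟩)
  calc ‖expConv A B W x‖ ≤ ∫ y in (0 : ℝ)..x, c * (M * ((c * (x - y)) ^ N / N.factorial)) := by
        refine norm_integral_le_of_norm_le hx (ae_of_all _ fun y hy => ?_)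
          (Continuous.intervalIntegrable (by fun_prop) _ _)
        have hy' : y ∈ Icc 0 x := Ioc_subset_Icc_self hy
        calc _ ≤ ‖exp (y • A) * B‖ * ‖W (x - y)‖ := norm_mul_le _ _
          _ ≤ _ := mul_le_mul (hK y hy') (hW (x - y) ⟨by linarith [hy'.2], by linarith [hy'.1]⟩)
              (norm_nonneg _) hc
    _ = M * ((c * x) ^ (N + 1) / (N + 1).factorial) := by
        have hsubst := integral_comp_sub_left
          (fun u => c * (M * ((c * u) ^ N / N.factorial))) x (a := 0) (b := x)
        simp only [sub_self, sub_zero] at hsubst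
        rw [hsubst]
        simp only [mul_pow, intervalIntegral.integral_const_mul, intervalIntegral.integral_div,
          integral_pow, zero_pow N.succ_ne_zero, sub_zero, Nat.factorial_succ, Nat.cast_mul,
          Nat.cast_succ]
        field_simp
        ring

lemma norm_expConv_iterate_le {D : ℕ → ℝ → 𝔸} {c M : ℝ}
    (hK : ∀ y ∈ Icc 0 T, ‖exp (y • A) * B‖ ≤ c) (hD₀ : ∀ y ∈ Icc 0 T, ‖D 0 y‖ ≤ M)
    (hD : ∀ N, ∀ x ∈ Icc 0 T, D (N + 1) x = expConv A B (D N) x) (N : ℕ) {x : ℝ}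
    (hx : x ∈ Icc 0 T) : ‖D N x‖ ≤ M * ((c * x) ^ N / N.factorial) := by
  induction N generalizing x with
  | zero => simpa using hD₀ x hx
  | succ N ih =>
    rw [hD N x hx]
    exact norm_expConv_le hx.1 (fun y hy => hK y ⟨hy.1, hy.2.trans hx.2⟩)
      fun y hy => ih ⟨hy.1, hy.2.trans hx.2⟩

variable [CompleteSpace 𝔸]

variable (A) in
lemma continuous_exp_smul : Continuous fun t : ℝ => exp (t • A) :=
  continuous_iff_continuousAt.2 fun t => (hasDerivAt_exp_smul_const A t).continuousAt

variable (A B) in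
theorem expConv_exp_smul_add (x : ℝ) :
    expConv A B (fun t => exp (t • (A + B))) x = exp (x • (A + B)) - exp (x • A) := by
  have hderiv : ∀ y, HasDerivAt (fun y => exp (y • A) * exp ((x - y) • (A + B)))
      (-(exp (y • A) * B * exp ((x - y) • (A + B)))) y := by
    intro y
    have h : HasDerivAt (fun y => exp ((x - y) • (A + B)))
        (-((A + B) * exp ((x - y) • (A + B)))) y :=
      ((hasDerivAt_exp_smul_const' (A + B) (x - y)).scomp y
        ((hasDerivAt_id y).const_sub x)).congr_deriv (neg_one_smul ℝ _)
    convert (hasDerivAt_exp_smul_const A y).fun_mul h using 1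
    noncomm_ring
  have hint : IntervalIntegrable (fun y => -(exp (y • A) * B * exp ((x - y) • (A + B))))
      volume 0 x :=
    ((((continuous_exp_smul A).mul continuous_const).mul
      ((continuous_exp_smul (A + B)).comp (continuous_sub_left x))).neg).intervalIntegrable _ _
  rw [expConv, ← neg_neg (∫ _ in _.._, _), ← intervalIntegral.integral_neg,
    integral_eq_sub_of_hasDerivAt (fun y _ => hderiv y) hint]
  simp

lemma intervalIntegrable_expConv {W : ℝ → 𝔸} (hW : ContinuousOn W (Icc 0 T)) {x : ℝ}
    (hx : x ∈ Icc 0 T) :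
    IntervalIntegrable (fun y => exp (y • A) * B * W (x - y)) volume 0 x := by
  refine ContinuousOn.intervalIntegrable_of_Icc hx.1 ?_
  refine ((continuous_exp_smul A).mul continuous_const).continuousOn.mul
    (hW.comp (continuous_sub_left x).continuousOn fun y hy => ?_)
  exact ⟨by linarith [hy.2], by linarith [hy.1, hx.2]⟩

lemma expConv_sub {W₁ W₂ : ℝ → 𝔸} (hW₁ : ContinuousOn W₁ (Icc 0 T))
    (hW₂ : ContinuousOn W₂ (Icc 0 T)) {x : ℝ} (hx : x ∈ Icc 0 T) :
    expConv A B (fun y => W₁ y - W₂ y) x = expConv A B W₁ x - expConv A B W₂ x := by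
  simp only [expConv, mul_sub]
  exact integral_sub (intervalIntegrable_expConv hW₁ hx) (intervalIntegrable_expConv hW₂ hx)

lemma expConv_sum {ι : Type*} (s : Finset ι) {W : ι → ℝ → 𝔸}
    (hW : ∀ i ∈ s, ContinuousOn (W i) (Icc 0 T)) {x : ℝ} (hx : x ∈ Icc 0 T) :
    expConv A B (fun y => ∑ i ∈ s, W i y) x = ∑ i ∈ s, expConv A B (W i) x := by
  simp only [expConv, Finset.mul_sum]
  exact integral_finsetSum fun i hi => intervalIntegrable_expConv (hW i hi) hx

lemma expConv_eq_exp_smul_mul_integral {W : ℝ → 𝔸} {x : ℝ}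
    (hW : IntervalIntegrable (fun u => exp (u • -A) * B * W u) volume 0 x) :
    expConv A B W x = exp (x • A) * ∫ u in (0 : ℝ)..x, exp (u • -A) * B * W u := by
  have hsplit : ∀ u : ℝ,
      exp ((x - u) • A) * B * W u = exp (x • A) * (exp (u • -A) * B * W u) := fun u => by
    let +nondep : NormedAlgebra ℚ 𝔸 := .restrictScalars ℚ ℝ 𝔸
    rw [sub_smul, sub_eq_add_neg, ← smul_neg,
      exp_add_of_commute (((Commute.refl A).neg_right.smul_left x).smul_right u)]
    noncomm_ring
  have hsubst := integral_comp_sub_left (fun u => exp ((x - u) • A) * B * W u) x (a := 0) (b := x)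
  simp only [sub_sub_cancel, sub_self, sub_zero] at hsubst
  rw [expConv, hsubst]
  simp_rw [hsplit]
  exact (ContinuousLinearMap.mul ℝ 𝔸 (exp (x • A))).intervalIntegral_comp_comm hW

lemma continuousOn_expConv {W : ℝ → 𝔸} (hW : ContinuousOn W (Icc 0 T)) :
    ContinuousOn (expConv A B W) (Icc 0 T) := by
  have hg : ContinuousOn (fun u => exp (u • -A) * B * W u) (Icc 0 T) :=
    ((continuous_exp_smul (-A)).mul continuous_const).continuousOn.mul hW
  refine ((continuous_exp_smul A).continuousOn.mul
    (continuousOn_primitive (μ := volume) hg.integrableOn_Icc)).congr fun x hx => ?_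
  rw [expConv_eq_exp_smul_mul_integral
    ((hg.mono (Icc_subset_Icc_right hx.2)).intervalIntegrable_of_Icc hx.1), integral_of_le hx.1]
  rfl

theorem tendsto_sum_expConv_iterate {U : ℕ → ℝ → 𝔸} (hU₀ : ∀ x, 0 ≤ x → U 0 x = exp (x • A))
    (hU : ∀ n x, 0 ≤ x → U (n + 1) x = expConv A B (U n) x) (hT : 0 ≤ T) :
    Tendsto (fun N => ∑ n ∈ Finset.range N, U n T) atTop (nhds (exp (T • (A + B)))) := by
  set E : ℝ → 𝔸 := fun t => exp (t • (A + B))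
  set S : ℕ → ℝ → 𝔸 := fun N x => ∑ n ∈ Finset.range N, U n x
  have hUc : ∀ n, ContinuousOn (U n) (Icc 0 T) := by
    intro n
    induction n with
    | zero => exact (continuous_exp_smul A).continuousOn.congr fun x hx => hU₀ x hx.1
    | succ n ih => exact (continuousOn_expConv ih).congr fun x hx => hU n x hx.1
  have hSc : ∀ N, ContinuousOn (S N) (Icc 0 T) := fun N =>
    continuousOn_finsetSum _ fun n _ => hUc n
  have hS : ∀ N, ∀ x ∈ Icc 0 T, S (N + 1) x = exp (x • A) + expConv A B (S N) x := by
    intro N x hx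
    simp only [S, Finset.sum_range_succ', hU _ x hx.1, hU₀ x hx.1,
      expConv_sum _ (fun n _ => hUc n) hx, add_comm]
  have hE : ∀ x, E x = exp (x • A) + expConv A B E x := fun x => by
    rw [expConv_exp_smul_add, add_sub_cancel]
  have hD : ∀ N, ∀ x ∈ Icc 0 T, E x - S (N + 1) x = expConv A B (fun y => E y - S N y) x := by
    intro N x hx
    rw [hE x, hS N x hx, add_sub_add_left_eq_sub,
      expConv_sub (continuous_exp_smul (A + B)).continuousOn (hSc N) hx]
  obtain ⟨c, hc⟩ := isCompact_Icc.exists_bound_of_continuousOn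
    ((continuous_exp_smul A).mul continuous_const).continuousOn
  obtain ⟨M, hM⟩ := isCompact_Icc.exists_bound_of_continuousOn
    ((continuous_exp_smul (A + B)).continuousOn.sub (hSc 0))
  have hbound := norm_expConv_iterate_le (D := fun N y => E y - S N y) hc hM hD
  rw [tendsto_iff_norm_sub_tendsto_zero]
  refine squeeze_zero (fun N => norm_nonneg _) (fun N => ?_)
    (by simpa using (FloorSemiring.tendsto_pow_div_factorial_atTop (c * T)).const_mul M)
  rw [norm_sub_rev]
  exact hbound N ⟨hT, le_rfl⟩

end BanachAlgebra

namespace Matrix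

variable {n : Type*} [Fintype n] [DecidableEq n]

/- With the entrywise sup norm, matrices do not form a normed ring; the Banach-algebra calculus of
`exp` is reached by transport to operators on Euclidean space. -/
noncomputable def toEuclideanCLE :
    Matrix n n ℝ ≃L[ℝ] (EuclideanSpace ℝ n →L[ℝ] EuclideanSpace ℝ n) :=
  (toEuclideanCLM (𝕜 := ℝ) (n := n)).toAlgEquiv.toLinearEquiv.toContinuousLinearEquiv

lemma toEuclideanCLE_apply (M : Matrix n n ℝ) : toEuclideanCLE M = toEuclideanCLM (𝕜 := ℝ) M :=
  rfl

lemma toEuclideanCLE_mul (M N : Matrix n n ℝ) :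
    toEuclideanCLE (M * N) = toEuclideanCLE M * toEuclideanCLE N := by
  simp only [toEuclideanCLE_apply, map_mul]

lemma toEuclideanCLE_exp (M : Matrix n n ℝ) :
    toEuclideanCLE (exp M) = exp (toEuclideanCLE M) := by
  simp only [toEuclideanCLE_apply]
  exact open scoped Norms.Operator in map_exp _ toEuclideanCLE.continuous M

lemma toEuclideanCLE_intervalIntegral (f : ℝ → Matrix n n ℝ) (a b : ℝ) :
    toEuclideanCLE (∫ x in a..b, f x) = ∫ x in a..b, toEuclideanCLE (f x) := by
  rw [intervalIntegral, intervalIntegral, map_sub]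
  congr 1 <;> exact (ContinuousLinearEquiv.integral_comp_comm toEuclideanCLE f).symm

theorem tendsto_sum_expConv_iterate (A B : Matrix n n ℝ) {U : ℕ → ℝ → Matrix n n ℝ}
    (hU₀ : ∀ x, 0 ≤ x → U 0 x = exp (x • A))
    (hU : ∀ k x, 0 ≤ x → U (k + 1) x = ∫ y in (0 : ℝ)..x, exp (y • A) * B * U k (x - y))
    {T : ℝ} (hT : 0 ≤ T) :
    Tendsto (fun N => ∑ k ∈ Finset.range N, U k T) atTop (nhds (exp (T • (A + B)))) := by
  have h := _root_.tendsto_sum_expConv_iterate (A := toEuclideanCLE A) (B := toEuclideanCLE B)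
    (U := fun k x => toEuclideanCLE (U k x)) (fun x hx => ?_) (fun k x hx => ?_) hT
  · rw [← map_add, ← map_smul, ← toEuclideanCLE_exp] at h
    simpa [Function.comp_def, ← map_sum] using (toEuclideanCLE.symm.continuous.tendsto _).comp h
  · rw [hU₀ x hx, toEuclideanCLE_exp, map_smul]
  · simp only [hU k x hx, expConv, toEuclideanCLE_intervalIntegral, toEuclideanCLE_mul,
      toEuclideanCLE_exp, map_smul]

end Matrix

theorem stmt15_general (p q : ℕ) (Cp : Matrix (Fin p) (Fin p) ℝ)
    (D : Matrix (Fin q) (Fin p) ℝ) (Ψ : Matrix (Fin p) (Fin q) ℝ)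
    (U : ℕ → ℝ → Matrix (Fin p) (Fin p) ℝ)
    (hU1 : ∀ x : ℝ, U 0 x = exp (x • Cp))
    (hUrec : ∀ n : ℕ, ∀ x : ℝ, 0 ≤ x →
      U (n+1) x = ∫ y in (0:ℝ)..x, exp (y • Cp) * (Ψ * D) * U n (x - y))
    (Ulim : ℝ → Matrix (Fin p) (Fin p) ℝ)
    (hconv : ∀ x : ℝ, 0 ≤ x →
      Tendsto (fun N : ℕ => ∑ n ∈ Finset.range N, U n x) atTop (nhds (Ulim x))) :
    ∀ x : ℝ, 0 ≤ x → Ulim x = exp (x • (Cp + Ψ * D)) := fun x hx =>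
  tendsto_nhds_unique (hconv x hx)
    (Matrix.tendsto_sum_expConv_iterate Cp (Ψ * D) (fun x _ => hU1 x) hUrec hx)

theorem stmt15 (p q : ℕ) (Cp : Matrix (Fin p) (Fin p) ℝ)
    (hp : ∀ μ ∈ spectrum ℂ (Cp.map (algebraMap ℝ ℂ)), μ.re < 0)
    (D : Matrix (Fin q) (Fin p) ℝ) (Ψ : Matrix (Fin p) (Fin q) ℝ)
    (U : ℕ → ℝ → Matrix (Fin p) (Fin p) ℝ)
    (hU1 : ∀ x : ℝ, U 0 x = exp (x • Cp))
    (hUrec : ∀ n : ℕ, ∀ x : ℝ, 0 ≤ x →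
      U (n+1) x = ∫ y in (0:ℝ)..x, exp (y • Cp) * (Ψ * D) * U n (x - y))
    (Ulim : ℝ → Matrix (Fin p) (Fin p) ℝ)
    (hbdd : ∀ x : ℝ, 0 ≤ x → ∃ K : ℝ, ∀ N : ℕ, ∀ y ∈ Set.Icc (0:ℝ) x,
      ‖∑ n ∈ Finset.range N, U n y‖ ≤ K)
    (hconv : ∀ x : ℝ, 0 ≤ x →
      Tendsto (fun N : ℕ => ∑ n ∈ Finset.range N, U n x) atTop (nhds (Ulim x))) :
    ∀ x : ℝ, 0 ≤ x → Ulim x = exp (x • (Cp + Ψ * D)) :=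
  stmt15_general p q Cp D Ψ U hU1 hUrec Ulim hconv
end
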